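/- Suppose each G_j : 𝒳 → ℝ^d is continuous and each h_j : 𝒳 → ℝ is Lipschitz continuous with modulus L_j > 0. Let θ^c ∈ Θ, r^c ∈ [0,1], and let (θ_N) ⊆ Θ and (r_N) ⊆ [0,1] be sequences with θ_N → θ^c and r_N → r^c. Then 𝔻(𝔛(θ_N, r_N), 𝔛(θ^c, r^c)) → 0 as N → ∞; equivalently, for every sequence x_N ∈ 𝔛(θ_N, r_N), every accumulation point of (x_N) belongs to 𝔛(θ^c, r^c). -/

import Mathlib

open Set Filter MeasureTheory
open scoped ENNReal

noncomputable section

/-- The probability simplex Θ in ℝⁿ. -/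
def simplex (n : ℕ) : Set (Fin n → ℝ) := {θ | ∑ j, θ j = 1 ∧ ∀ j, 0 ≤ θ j}

/-- Ambiguity set `𝔹∞(c, r) ∩ Θ`.  (The norm on `Fin n → ℝ` is the sup norm.) -/
def amb {n : ℕ} (c : Fin n → ℝ) (r : ℝ) : Set (Fin n → ℝ) :=
  {θ | ‖θ - c‖ ≤ r} ∩ simplex n

/-- Regularized lower-level objective `∑_j θ_j h_j(x) − λ‖θ‖²` (Euclidean norm squared). -/
def obj {n d : ℕ} (h : Fin n → (Fin d → ℝ) → ℝ) (lam : ℝ) (x : Fin d → ℝ)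
    (θ : Fin n → ℝ) : ℝ :=
  (∑ j, θ j * h j x) - lam * ∑ j, (θ j) ^ 2

/-- Optimal value `ν^λ(x, c, r)` of the regularized lower-level problem. -/
def nuval {n d : ℕ} (h : Fin n → (Fin d → ℝ) → ℝ) (lam : ℝ) (x : Fin d → ℝ)
    (c : Fin n → ℝ) (r : ℝ) : ℝ :=
  sSup (obj h lam x '' amb c r)

/-- Maximizer set `ϑ^λ(x, c, r)` of the regularized lower-level problem. -/
def argmaxSet {n d : ℕ} (h : Fin n → (Fin d → ℝ) → ℝ) (lam : ℝ) (x : Fin d → ℝ)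
    (c : Fin n → ℝ) (r : ℝ) : Set (Fin n → ℝ) :=
  {θ ∈ amb c r | obj h lam x θ = nuval h lam x c r}

/-- Normal cone of `X` at `x` (standard inner product on ℝ^d). -/
def normalCone {d : ℕ} (X : Set (Fin d → ℝ)) (x : Fin d → ℝ) : Set (Fin d → ℝ) :=
  {v | ∀ y ∈ X, ∑ i, v i * (y i - x i) ≤ 0}

/-- x-solution set `𝔛^λ(c, r)` of the (regularized) Bayesian DRVI. -/
def solSet {n d : ℕ} (G : Fin n → (Fin d → ℝ) → Fin d → ℝ)
    (h : Fin n → (Fin d → ℝ) → ℝ) (lam : ℝ) (X : Set (Fin d → ℝ))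
    (c : Fin n → ℝ) (r : ℝ) : Set (Fin d → ℝ) :=
  {x ∈ X | ∃ θ ∈ argmaxSet h lam x c r,
      ∀ y ∈ X, 0 ≤ ∑ i, (∑ j, θ j * G j x i) * (y i - x i)}

/-- One-sided deviation `𝔻(S, T)` (the metric of the Pi type is the sup metric). -/
def dev {α : Type*} [PseudoMetricSpace α] (S T : Set α) : ℝ :=
  sSup ((fun s => Metric.infDist s T) '' S)

/-- One-sided deviation with values in `ℝ≥0∞`. -/
def devE {α : Type*} [PseudoMetricSpace α] (S T : Set α) : ℝ≥0∞ :=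
  ⨆ s ∈ S, ENNReal.ofReal (Metric.infDist s T)

/-- Lower-level growth function `ψ_x^λ` at parameters `(c, r)`
(values in `[0,∞]`; the infimum over the empty set is `⊤`). -/
def psiLow {n d : ℕ} (h : Fin n → (Fin d → ℝ) → ℝ) (lam : ℝ) (x : Fin d → ℝ)
    (c : Fin n → ℝ) (r : ℝ) (τ : ℝ) : ℝ≥0∞ :=
  ⨅ θ ∈ {θ ∈ amb c r | τ ≤ Metric.infDist θ (argmaxSet h lam x c r)},
    ENNReal.ofReal (nuval h lam x c r - obj h lam x θ)

/-- Generalized inverse `(ψ_x^λ)⁻¹(t) = sup{τ ≥ 0 : ψ_x^λ(τ) ≤ t}`. -/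
def psiLowInv {n d : ℕ} (h : Fin n → (Fin d → ℝ) → ℝ) (lam : ℝ) (x : Fin d → ℝ)
    (c : Fin n → ℝ) (r : ℝ) (t : ℝ) : ℝ≥0∞ :=
  ⨆ τ ∈ {τ : ℝ | 0 ≤ τ ∧ psiLow h lam x c r τ ≤ ENNReal.ofReal t}, ENNReal.ofReal τ

/-- `Ψ_x^λ(η) = η + (ψ_x^λ)⁻¹(2η)`. -/
def PsiLow {n d : ℕ} (h : Fin n → (Fin d → ℝ) → ℝ) (lam : ℝ) (x : Fin d → ℝ)
    (c : Fin n → ℝ) (r : ℝ) (η : ℝ) : ℝ≥0∞ :=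
  ENNReal.ofReal η + psiLowInv h lam x c r (2 * η)

/-- Residual `d(0, ∑_j θ_j G_j(x) + N_X(x))` (ℓ∞ distance). -/
def resid {n d : ℕ} (G : Fin n → (Fin d → ℝ) → Fin d → ℝ) (X : Set (Fin d → ℝ))
    (x : Fin d → ℝ) (θ : Fin n → ℝ) : ℝ :=
  Metric.infDist (0 : Fin d → ℝ)
    ((fun w => (fun i => ∑ j, θ j * G j x i) + w) '' normalCone X x)

/-- Solution-set growth function `ψ^λ_{c,r}` (values in `[0,∞]`). -/
def psiSol {n d : ℕ} (G : Fin n → (Fin d → ℝ) → Fin d → ℝ)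
    (h : Fin n → (Fin d → ℝ) → ℝ) (lam : ℝ) (X : Set (Fin d → ℝ))
    (c : Fin n → ℝ) (r : ℝ) (τ : ℝ) : ℝ≥0∞ :=
  ⨅ x ∈ {x ∈ X | τ ≤ Metric.infDist x (solSet G h lam X c r)},
    ⨅ θ ∈ argmaxSet h lam x c r, ENNReal.ofReal (resid G X x θ)

/-- Generalized inverse `(ψ^λ_{c,r})⁻¹(t) = sup{τ ≥ 0 : ψ^λ_{c,r}(τ) ≤ t}`. -/
def psiSolInv {n d : ℕ} (G : Fin n → (Fin d → ℝ) → Fin d → ℝ)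
    (h : Fin n → (Fin d → ℝ) → ℝ) (lam : ℝ) (X : Set (Fin d → ℝ))
    (c : Fin n → ℝ) (r : ℝ) (t : ℝ) : ℝ≥0∞ :=
  ⨆ τ ∈ {τ : ℝ | 0 ≤ τ ∧ psiSol G h lam X c r τ ≤ ENNReal.ofReal t}, ENNReal.ofReal τ

/-! A closed-graph argument. Along a subsequence, solutions `x_N ∈ 𝔛(θ_N, r_N)` and
maximizers `μ_N ∈ ϑ(x_N, θ_N, r_N)` witnessing the variational inequality converge by
compactness. The limit of the `μ_N` is again a maximizer, because every point of
`Θ̂(θ^c, r^c)` is approached by points of `Θ̂(θ_N, r_N)` taken on the segments from the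
centres `θ_N`; the variational inequality passes to the limit by continuity. -/

open Topology

theorem simplex_eq_stdSimplex (n : ℕ) : simplex n = stdSimplex ℝ (Fin n) := by
  ext θ
  simp only [simplex, stdSimplex, Set.mem_ofPred_eq, and_comm]

theorem isCompact_amb {n : ℕ} (c : Fin n → ℝ) (r : ℝ) : IsCompact (amb c r) := by
  have hball : {θ : Fin n → ℝ | ‖θ - c‖ ≤ r} = Metric.closedBall c r := by
    ext θ
    simp [dist_eq_norm]
  rw [amb, hball, simplex_eq_stdSimplex]
  exact (isCompact_stdSimplex ℝ (Fin n)).inter_left Metric.isClosed_closedBall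

theorem mem_amb_of_tendsto {n : ℕ} {θc θb : Fin n → ℝ} {rc : ℝ} {c μ : ℕ → Fin n → ℝ}
    {ρ : ℕ → ℝ} (hμ : ∀ k, μ k ∈ amb (c k) (ρ k)) (hμt : Tendsto μ atTop (𝓝 θb))
    (hc : Tendsto c atTop (𝓝 θc)) (hρ : Tendsto ρ atTop (𝓝 rc)) : θb ∈ amb θc rc := by
  refine ⟨le_of_tendsto_of_tendsto' (hμt.sub hc).norm hρ fun k => (hμ k).1, ?_⟩
  rw [simplex_eq_stdSimplex]
  exact (isClosed_stdSimplex ℝ (Fin n)).mem_of_tendsto hμt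
    (Eventually.of_forall fun k => simplex_eq_stdSimplex n ▸ (hμ k).2)

theorem exists_mem_segment_dist_le {E : Type*} [NormedAddCommGroup E] [NormedSpace ℝ E]
    (a b : E) {ρ : ℝ} (hρ : 0 ≤ ρ) :
    ∃ z ∈ segment ℝ a b, dist z a ≤ ρ ∧ dist z b ≤ max 0 (dist a b - ρ) := by
  rcases le_or_gt (dist a b) ρ with hab | hab
  · exact ⟨b, right_mem_segment ℝ a b, by rwa [dist_comm], by simp⟩
  have hpos : 0 < dist a b := hρ.trans_lt hab
  have ht0 : 0 ≤ ρ / dist a b := div_nonneg hρ hpos.le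
  have ht1 : ρ / dist a b ≤ 1 := (div_le_one hpos).2 hab.le
  refine ⟨AffineMap.lineMap a b (ρ / dist a b), ?_, ?_, ?_⟩
  · rw [segment_eq_image_lineMap]
    exact ⟨_, ⟨ht0, ht1⟩, rfl⟩
  · rw [dist_lineMap_left, Real.norm_of_nonneg ht0, div_mul_cancel₀ _ hpos.ne']
  · rw [dist_lineMap_right, Real.norm_of_nonneg (sub_nonneg.2 ht1), sub_mul, one_mul,
      div_mul_cancel₀ _ hpos.ne']
    exact le_max_right _ _

theorem exists_tendsto_mem_amb {n : ℕ} {θc θ' : Fin n → ℝ} {rc : ℝ} {c : ℕ → Fin n → ℝ}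
    {ρ : ℕ → ℝ} (hcs : ∀ k, c k ∈ simplex n) (hρ0 : ∀ k, 0 ≤ ρ k)
    (hc : Tendsto c atTop (𝓝 θc)) (hρ : Tendsto ρ atTop (𝓝 rc)) (hθ' : θ' ∈ amb θc rc) :
    ∃ T : ℕ → Fin n → ℝ, (∀ k, T k ∈ amb (c k) (ρ k)) ∧ Tendsto T atTop (𝓝 θ') := by
  choose T hTseg hTc hTθ' using fun k => exists_mem_segment_dist_le (c k) θ' (hρ0 k)
  refine ⟨T, fun k => ⟨by simpa [dist_eq_norm] using hTc k, ?_⟩, ?_⟩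
  · rw [simplex_eq_stdSimplex] at hcs ⊢
    exact (convex_stdSimplex ℝ (Fin n)).segment_subset (hcs k)
      (simplex_eq_stdSimplex n ▸ hθ'.2) (hTseg k)
  · have hgap : Tendsto (fun k => max 0 (dist (c k) θ' - ρ k)) atTop (𝓝 0) := by
      have hlim := (tendsto_const_nhds (x := (0 : ℝ))).max
        ((hc.dist (tendsto_const_nhds (x := θ'))).sub hρ)
      rwa [max_eq_left (by simpa [dist_eq_norm'] using hθ'.1)] at hlim
    exact tendsto_iff_dist_tendsto_zero.2 (squeeze_zero (fun _ => dist_nonneg) hTθ' hgap)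

theorem tendsto_obj {n d : ℕ} {h : Fin n → (Fin d → ℝ) → ℝ} {X : Set (Fin d → ℝ)}
    (hh : ∀ j, ContinuousOn (h j) X) (lam : ℝ) {ι : Type*} {l : Filter ι}
    {x : ι → Fin d → ℝ} {θ : ι → Fin n → ℝ} {xb : Fin d → ℝ} {θb : Fin n → ℝ} (hxb : xb ∈ X)
    (hx : Tendsto x l (𝓝[X] xb)) (hθ : Tendsto θ l (𝓝 θb)) :
    Tendsto (fun k => obj h lam (x k) (θ k)) l (𝓝 (obj h lam xb θb)) := by
  have hθj : ∀ j, Tendsto (fun k => θ k j) l (𝓝 (θb j)) := tendsto_pi_nhds.1 hθ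
  exact (tendsto_finsetSum _ fun j _ => (hθj j).mul ((hh j xb hxb).tendsto.comp hx)).sub
    (tendsto_const_nhds.mul (tendsto_finsetSum _ fun j _ => (hθj j).pow 2))

theorem mem_argmaxSet_iff {n d : ℕ} {h : Fin n → (Fin d → ℝ) → ℝ} {lam : ℝ}
    {x : Fin d → ℝ} {c θ : Fin n → ℝ} {r : ℝ} :
    θ ∈ argmaxSet h lam x c r ↔ θ ∈ amb c r ∧ ∀ θ' ∈ amb c r, obj h lam x θ' ≤ obj h lam x θ := by
  have hbdd : BddAbove (obj h lam x '' amb c r) :=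
    (isCompact_amb c r).bddAbove_image (by unfold obj; fun_prop)
  constructor
  · rintro ⟨hθ, hmax⟩
    exact ⟨hθ, fun θ' hθ' => hmax ▸ le_csSup hbdd (mem_image_of_mem _ hθ')⟩
  · rintro ⟨hθ, hmax⟩
    refine ⟨hθ, (IsGreatest.csSup_eq ⟨mem_image_of_mem _ hθ, ?_⟩).symm⟩
    rintro _ ⟨θ', hθ', rfl⟩
    exact hmax θ' hθ'

section Stability

variable {n d : ℕ} {X : Set (Fin d → ℝ)} {h : Fin n → (Fin d → ℝ) → ℝ} {θc : Fin n → ℝ}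
  {rc : ℝ} {c : ℕ → Fin n → ℝ} {ρ : ℕ → ℝ} {x : ℕ → Fin d → ℝ} {xb : Fin d → ℝ}

theorem mem_argmaxSet_of_tendsto (hh : ∀ j, ContinuousOn (h j) X) (lam : ℝ)
    (hcs : ∀ k, c k ∈ simplex n) (hρ0 : ∀ k, 0 ≤ ρ k)
    (hc : Tendsto c atTop (𝓝 θc)) (hρ : Tendsto ρ atTop (𝓝 rc))
    (hxb : xb ∈ X) (hx : Tendsto x atTop (𝓝[X] xb)) {μ : ℕ → Fin n → ℝ} {θb : Fin n → ℝ}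
    (hμ : ∀ k, μ k ∈ argmaxSet h lam (x k) (c k) (ρ k)) (hμt : Tendsto μ atTop (𝓝 θb)) :
    θb ∈ argmaxSet h lam xb θc rc := by
  simp only [mem_argmaxSet_iff] at hμ ⊢
  refine ⟨mem_amb_of_tendsto (fun k => (hμ k).1) hμt hc hρ, fun θ' hθ' => ?_⟩
  obtain ⟨T, hT, hTt⟩ := exists_tendsto_mem_amb hcs hρ0 hc hρ hθ'
  exact le_of_tendsto_of_tendsto' (tendsto_obj hh lam hxb hx hTt)
    (tendsto_obj hh lam hxb hx hμt) fun k => (hμ k).2 (T k) (hT k)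

theorem mem_solSet_of_tendsto {G : Fin n → (Fin d → ℝ) → Fin d → ℝ} (hX : IsClosed X)
    (hG : ∀ j, ContinuousOn (G j) X) (hh : ∀ j, ContinuousOn (h j) X) (lam : ℝ)
    (hcs : ∀ k, c k ∈ simplex n) (hρ0 : ∀ k, 0 ≤ ρ k)
    (hc : Tendsto c atTop (𝓝 θc)) (hρ : Tendsto ρ atTop (𝓝 rc))
    (hxs : ∀ k, x k ∈ solSet G h lam X (c k) (ρ k)) (hxt : Tendsto x atTop (𝓝 xb)) :
    xb ∈ solSet G h lam X θc rc := by
  have hxX : ∀ k, x k ∈ X := fun k => (hxs k).1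
  have hxb : xb ∈ X := hX.mem_of_tendsto hxt (Eventually.of_forall hxX)
  have hxt' : Tendsto x atTop (𝓝[X] xb) :=
    tendsto_nhdsWithin_iff.2 ⟨hxt, Eventually.of_forall hxX⟩
  choose μ hμ hVI using fun k => (hxs k).2
  obtain ⟨θb, -, φ, hφ, hμt⟩ := (isCompact_stdSimplex ℝ (Fin n)).tendsto_subseq
    fun k => simplex_eq_stdSimplex n ▸ (hμ k).1.2
  have hφt := hφ.tendsto_atTop
  refine ⟨hxb, θb, mem_argmaxSet_of_tendsto hh lam (fun _ => hcs _) (fun _ => hρ0 _)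
    (hc.comp hφt) (hρ.comp hφt) hxb (hxt'.comp hφt) (fun k => hμ (φ k)) hμt, fun y hy => ?_⟩
  have hpair : Tendsto (fun k => ∑ i, (∑ j, μ (φ k) j * G j (x (φ k)) i) * (y i - x (φ k) i))
      atTop (𝓝 (∑ i, (∑ j, θb j * G j xb i) * (y i - xb i))) :=
    tendsto_finsetSum _ fun i _ => (tendsto_finsetSum _ fun j _ =>
      (tendsto_pi_nhds.1 hμt j).mul
        (tendsto_pi_nhds.1 ((hG j xb hxb).tendsto.comp (hxt'.comp hφt)) i)).mul
      (tendsto_const_nhds.sub (tendsto_pi_nhds.1 (hxt.comp hφt) i))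
  exact ge_of_tendsto' hpair fun k => hVI (φ k) y hy

end Stability

theorem eventually_forall_infDist_le {α : Type*} [PseudoMetricSpace α] {X B : Set α}
    (hX : IsCompact X) {A : ℕ → Set α} (hAX : ∀ N, A N ⊆ X)
    (hlim : ∀ (f : ℕ → ℕ) (x : ℕ → α) (xb : α), Tendsto f atTop atTop →
      (∀ k, x k ∈ A (f k)) → Tendsto x atTop (𝓝 xb) → xb ∈ B)
    {ε : ℝ} (hε : 0 < ε) : ∀ᶠ N in atTop, ∀ x ∈ A N, Metric.infDist x B ≤ ε := by
  by_contra hfar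
  simp only [not_eventually, not_forall, not_le, exists_prop, frequently_atTop] at hfar
  choose f hf x hxA hxfar using hfar
  obtain ⟨xb, -, φ, hφ, hxt⟩ := hX.tendsto_subseq fun k => hAX _ (hxA k)
  have hfφ : Tendsto (fun k => f (φ k)) atTop atTop :=
    tendsto_atTop_mono (fun k => hφ.le_apply.trans (hf _)) tendsto_id
  have hxbB : xb ∈ B := hlim _ _ xb hfφ (fun k => hxA (φ k)) hxt
  have hεle : ε ≤ Metric.infDist xb B :=
    ge_of_tendsto' (((Metric.continuous_infDist_pt B).tendsto xb).comp hxt)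
      fun k => (hxfar (φ k)).le
  rw [Metric.infDist_zero_of_mem hxbB] at hεle
  linarith

theorem solSet_convergence_general {n d : ℕ}
    (X : Set (Fin d → ℝ)) (hXcomp : IsCompact X)
    (G : Fin n → (Fin d → ℝ) → Fin d → ℝ) (h : Fin n → (Fin d → ℝ) → ℝ)
    (hG : ∀ j, ContinuousOn (G j) X)
    (L : Fin n → ℝ)
    (hhLip : ∀ j, ∀ x ∈ X, ∀ y ∈ X, |h j x - h j y| ≤ L j * ‖x - y‖)
    (θc : Fin n → ℝ) (rc : ℝ)
    (θN : ℕ → Fin n → ℝ) (hθN : ∀ N, θN N ∈ simplex n)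
    (rN : ℕ → ℝ) (hrN : ∀ N, rN N ∈ Set.Icc (0 : ℝ) 1)
    (hθconv : Tendsto θN atTop (nhds θc)) (hrconv : Tendsto rN atTop (nhds rc)) :
    ∀ ε : ℝ, 0 < ε → ∃ N0 : ℕ, ∀ N ≥ N0,
      ∀ x ∈ solSet G h 0 X (θN N) (rN N),
        Metric.infDist x (solSet G h 0 X θc rc) ≤ ε := by
  have hh : ∀ j, ContinuousOn (h j) X := fun j =>
    (LipschitzOnWith.of_dist_le' fun x hx y hy => by
      simpa only [Real.dist_eq, dist_eq_norm, Real.norm_eq_abs] using hhLip j x hx y hy).continuousOn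
  intro ε hε
  refine eventually_atTop.1 (eventually_forall_infDist_le hXcomp (fun _ _ hx => hx.1) ?_ hε)
  intro f x xb hf hxs hxt
  exact mem_solSet_of_tendsto hXcomp.isClosed hG hh 0 (fun _ => hθN _) (fun _ => (hrN _).1)
    (hθconv.comp hf) (hrconv.comp hf) hxs hxt

/-- Theorem 3.5 (deterministic core): convergence of the data-driven x-solution sets to
the true one as the ambiguity parameters converge. -/
theorem solSet_convergence {n d : ℕ} (hn : 1 ≤ n) (hd : 1 ≤ d)
    (X : Set (Fin d → ℝ)) (hXne : X.Nonempty) (hXcomp : IsCompact X) (hXconv : Convex ℝ X)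
    (G : Fin n → (Fin d → ℝ) → Fin d → ℝ) (h : Fin n → (Fin d → ℝ) → ℝ)
    (hG : ∀ j, ContinuousOn (G j) X)
    (L : Fin n → ℝ) (hL : ∀ j, 0 < L j)
    (hhLip : ∀ j, ∀ x ∈ X, ∀ y ∈ X, |h j x - h j y| ≤ L j * ‖x - y‖)
    (θc : Fin n → ℝ) (hθc : θc ∈ simplex n) (rc : ℝ) (hrc : rc ∈ Set.Icc (0 : ℝ) 1)
    (θN : ℕ → Fin n → ℝ) (hθN : ∀ N, θN N ∈ simplex n)
    (rN : ℕ → ℝ) (hrN : ∀ N, rN N ∈ Set.Icc (0 : ℝ) 1)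
    (hθconv : Tendsto θN atTop (nhds θc)) (hrconv : Tendsto rN atTop (nhds rc)) :
    ∀ ε : ℝ, 0 < ε → ∃ N0 : ℕ, ∀ N ≥ N0,
      ∀ x ∈ solSet G h 0 X (θN N) (rN N),
        Metric.infDist x (solSet G h 0 X θc rc) ≤ ε :=
  solSet_convergence_general X hXcomp G h hG L hhLip θc rc θN hθN rN hrN hθconv hrconv
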